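/- For nonempty compact metric spaces (X,d), (X',d') with Borel probability measures μ, μ', one has (1/3)·Δ_GHP((X,d,μ),(X',d',μ')) ≤ d_GHP((X,d,μ),(X',d',μ')) ≤ 2·Δ_GHP((X,d,μ),(X',d',μ')), where Δ_GHP is the infimum of all ε > 0 such that the two spaces are ε-close. -/

import Mathlib

open MeasureTheory Set

section GHP

variable {X Y : Type*}

/-- A "glue metric": a metric on the disjoint union `X ⊕ Y` whose restrictions to `X`
and `Y` coincide with the given metrics. -/
structure IsGlueMetric [MetricSpace X] [MetricSpace Y] (δ : X ⊕ Y → X ⊕ Y → ℝ) : Prop where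
  refl : ∀ a, δ a a = 0
  pos : ∀ a b, a ≠ b → 0 < δ a b
  symm : ∀ a b, δ a b = δ b a
  triangle : ∀ a b c, δ a c ≤ δ a b + δ b c
  restr_left : ∀ x x' : X, δ (Sum.inl x) (Sum.inl x') = dist x x'
  restr_right : ∀ y y' : Y, δ (Sum.inr y) (Sum.inr y') = dist y y'

/-- The Hausdorff distance, in `(X ⊕ Y, δ)`, between (the images of) `X` and `Y`:
the infimum of `ε > 0` such that each space is contained in the open `ε`-neighborhood
of the other. -/
noncomputable def glueHausdorffDist (δ : X ⊕ Y → X ⊕ Y → ℝ) : ℝ :=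
  sInf {ε : ℝ | 0 < ε ∧ (∀ x : X, ∃ y : Y, δ (Sum.inl x) (Sum.inr y) < ε) ∧
    (∀ y : Y, ∃ x : X, δ (Sum.inl x) (Sum.inr y) < ε)}

/-- The Prokhorov distance, in `(X ⊕ Y, δ)`, between the pushforwards of `μ` and `ν`:
the infimum of `ε > 0` such that `μ(C) ≤ ν(C^ε) + ε` for every `δ`-closed set `C`,
where `C^ε` is the open `ε`-neighborhood for `δ`. -/
noncomputable def glueProkhorovDist [MeasurableSpace X] [MeasurableSpace Y]
    (δ : X ⊕ Y → X ⊕ Y → ℝ) (μ : Measure X) (ν : Measure Y) : ℝ :=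
  sInf {ε : ℝ | 0 < ε ∧ ∀ C : Set (X ⊕ Y),
    (∀ a ∉ C, ∃ η > 0, ∀ b ∈ C, η ≤ δ a b) →
    μ (Sum.inl ⁻¹' C) ≤ ν (Sum.inr ⁻¹' {a | ∃ b ∈ C, δ a b < ε}) + ENNReal.ofReal ε}

/-- The Gromov–Hausdorff–Prokhorov distance between two metric spaces equipped with
Borel measures: the infimum, over all metrics `δ` on the disjoint union restricting to
the given metrics, of the maximum of the Hausdorff distance between the two spaces and
the Prokhorov distance between the pushforward measures. -/
noncomputable def ghpDist [MetricSpace X] [MetricSpace Y]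
    [MeasurableSpace X] [MeasurableSpace Y] (μ : Measure X) (ν : Measure Y) : ℝ :=
  sInf {r : ℝ | ∃ δ : X ⊕ Y → X ⊕ Y → ℝ, IsGlueMetric δ ∧
    r = max (glueHausdorffDist δ) (glueProkhorovDist δ μ ν)}

end GHP

section EpsClose

variable {X Y : Type*}

/-- `f` is an `ε`-isometry: it distorts distances by at most `ε` and its range is an
`ε`-net. -/
def IsEpsIsometry [MetricSpace X] [MetricSpace Y] (ε : ℝ) (f : X → Y) : Prop :=
  (∀ x x' : X, |dist x x' - dist (f x) (f x')| ≤ ε) ∧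
    ∀ y : Y, ∃ x : X, dist y (f x) < ε

/-- The (one-sided) Prokhorov distance between two Borel measures on a metric space:
the infimum of `ε > 0` such that `μ(C) ≤ ν(C^ε) + ε` for every closed `C`. -/
noncomputable def prokhorovDist {Ω : Type*} [MetricSpace Ω] [MeasurableSpace Ω]
    (μ ν : Measure Ω) : ℝ :=
  sInf {ε : ℝ | 0 < ε ∧ ∀ C : Set Ω, IsClosed C →
    μ C ≤ ν (Metric.thickening ε C) + ENNReal.ofReal ε}

/-- The spaces are `ε`-close: there are measurable `ε`-isometries in both directions
whose pushforward measures are `ε`-close in Prokhorov distance to the target measure. -/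
def EpsClose [MetricSpace X] [MetricSpace Y] [MeasurableSpace X] [MeasurableSpace Y]
    (ε : ℝ) (μ : Measure X) (μ' : Measure Y) : Prop :=
  ∃ f : X → Y, ∃ g : Y → X, Measurable f ∧ Measurable g ∧
    IsEpsIsometry ε f ∧ IsEpsIsometry ε g ∧
    prokhorovDist (Measure.map f μ) μ' ≤ ε ∧ prokhorovDist (Measure.map g μ') μ ≤ ε

/-- The Evans–Winter quasi-distance `Δ_GHP`. -/
noncomputable def deltaGHP [MetricSpace X] [MetricSpace Y]
    [MeasurableSpace X] [MeasurableSpace Y] (μ : Measure X) (μ' : Measure Y) : ℝ :=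
  sInf {ε : ℝ | 0 < ε ∧ EpsClose ε μ μ'}

end EpsClose

/-!
For `Δ_GHP ≤ 2 d_GHP`: if, in a glued space, `X` and `Y` are `ε`-Hausdorff-close and the measures
`ε`-Prokhorov-close, then sending each `x` to a nearby point of `Y` (chosen measurably via a dense
sequence, at the cost of an extra `θ`) gives a `2(ε + θ)`-isometry whose pushforward is
`2(ε + θ)`-close to the target measure; the reverse map comes from the same gluing read backwards,
since for probability measures the one-sided Prokhorov inequality can be reversed.

For `d_GHP ≤ 2 Δ_GHP`: an `ε`-isometry `f` yields a gluing in which `x` and `f x` are at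
distance `ε / 2` (Mathlib's `Metric.glueDist`), and there both distances are at most `2ε`.
-/

open Sum

section Infimum

variable {P : ℝ → Prop} {r : ℝ}

lemma sInf_setOf_pos_nonneg (P : ℝ → Prop) : 0 ≤ sInf {ε : ℝ | 0 < ε ∧ P ε} :=
  Real.sInf_nonneg fun _ hε => hε.1.le

lemma sInf_setOf_pos_le (hr : 0 < r) (h : P r) : sInf {ε : ℝ | 0 < ε ∧ P ε} ≤ r :=
  csInf_le ⟨0, fun _ hε => hε.1.le⟩ ⟨hr, h⟩

lemma Monotone.of_sInf_setOf_pos_lt (hP : Monotone P) (hne : ∃ ε, 0 < ε ∧ P ε)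
    (h : sInf {ε : ℝ | 0 < ε ∧ P ε} < r) : P r := by
  obtain ⟨ε, hε, hεr⟩ := exists_lt_of_csInf_lt hne h
  exact hP hεr.le hε.2

end Infimum

section GlueNotions

variable {X Y : Type*}

/- `glueHausdorffDist δ`, `glueProkhorovDist δ μ ν` and `prokhorovDist μ ν` are, definitionally,
the infima over `ε > 0` of `GlueHausdorffLT δ ε`, `GlueProkhorovLE δ μ ν ε` and
`ProkhorovLE μ ν ε`. -/

def IsGlueClosed (δ : X ⊕ Y → X ⊕ Y → ℝ) (C : Set (X ⊕ Y)) : Prop :=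
  ∀ a ∉ C, ∃ η > 0, ∀ b ∈ C, η ≤ δ a b

def glueThickening (δ : X ⊕ Y → X ⊕ Y → ℝ) (ε : ℝ) (C : Set (X ⊕ Y)) : Set (X ⊕ Y) :=
  {a | ∃ b ∈ C, δ a b < ε}

def glueClosure (δ : X ⊕ Y → X ⊕ Y → ℝ) (S : Set (X ⊕ Y)) : Set (X ⊕ Y) :=
  {a | ∀ γ > 0, ∃ b ∈ S, δ a b < γ}

def GlueHausdorffLT (δ : X ⊕ Y → X ⊕ Y → ℝ) (ε : ℝ) : Prop :=
  (∀ x : X, ∃ y : Y, δ (inl x) (inr y) < ε) ∧ ∀ y : Y, ∃ x : X, δ (inl x) (inr y) < ε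

def GlueProkhorovLE [MeasurableSpace X] [MeasurableSpace Y] (δ : X ⊕ Y → X ⊕ Y → ℝ)
    (μ : Measure X) (ν : Measure Y) (ε : ℝ) : Prop :=
  ∀ C, IsGlueClosed δ C → μ (inl ⁻¹' C) ≤ ν (inr ⁻¹' glueThickening δ ε C) + ENNReal.ofReal ε

def ProkhorovLE {Ω : Type*} [MetricSpace Ω] [MeasurableSpace Ω] (μ ν : Measure Ω) (ε : ℝ) :
    Prop :=
  ∀ C, IsClosed C → μ C ≤ ν (Metric.thickening ε C) + ENNReal.ofReal ε

lemma glueHausdorffLT_mono (δ : X ⊕ Y → X ⊕ Y → ℝ) : Monotone (GlueHausdorffLT δ) :=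
  fun _ _ hεε' h => ⟨fun x => (h.1 x).imp fun _ hy => hy.trans_le hεε',
    fun y => (h.2 y).imp fun _ hx => hx.trans_le hεε'⟩

lemma glueProkhorovLE_mono [MeasurableSpace X] [MeasurableSpace Y] (δ : X ⊕ Y → X ⊕ Y → ℝ)
    (μ : Measure X) (ν : Measure Y) : Monotone (GlueProkhorovLE δ μ ν) :=
  fun _ _ hεε' h C hC => (h C hC).trans <| add_le_add
    (measure_mono <| preimage_mono fun _ ⟨b, hb, hab⟩ => ⟨b, hb, hab.trans_le hεε'⟩)
    (ENNReal.ofReal_le_ofReal hεε')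

lemma prokhorovLE_mono {Ω : Type*} [MetricSpace Ω] [MeasurableSpace Ω] (μ ν : Measure Ω) :
    Monotone (ProkhorovLE μ ν) :=
  fun _ _ hεε' h C hC => (h C hC).trans <|
    add_le_add (measure_mono <| Metric.thickening_mono hεε' C) (ENNReal.ofReal_le_ofReal hεε')

lemma glueProkhorovLE_one [MeasurableSpace X] [MeasurableSpace Y] (δ : X ⊕ Y → X ⊕ Y → ℝ)
    (μ : Measure X) [IsProbabilityMeasure μ] (ν : Measure Y) : GlueProkhorovLE δ μ ν 1 :=
  fun _ _ => prob_le_one.trans <| by simp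

lemma prokhorovLE_one {Ω : Type*} [MetricSpace Ω] [MeasurableSpace Ω] (μ : Measure Ω)
    [IsProbabilityMeasure μ] (ν : Measure Ω) : ProkhorovLE μ ν 1 :=
  fun _ _ => prob_le_one.trans <| by simp

lemma glueProkhorovLE_of_glueProkhorovDist_lt [MeasurableSpace X] [MeasurableSpace Y]
    {δ : X ⊕ Y → X ⊕ Y → ℝ} {μ : Measure X} [IsProbabilityMeasure μ] {ν : Measure Y} {ε : ℝ}
    (h : glueProkhorovDist δ μ ν < ε) : GlueProkhorovLE δ μ ν ε :=
  (glueProkhorovLE_mono δ μ ν).of_sInf_setOf_pos_lt ⟨1, one_pos, glueProkhorovLE_one δ μ ν⟩ h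

lemma prokhorovLE_of_prokhorovDist_lt {Ω : Type*} [MetricSpace Ω] [MeasurableSpace Ω]
    {μ : Measure Ω} [IsProbabilityMeasure μ] {ν : Measure Ω} {ε : ℝ}
    (h : prokhorovDist μ ν < ε) : ProkhorovLE μ ν ε :=
  (prokhorovLE_mono μ ν).of_sInf_setOf_pos_lt ⟨1, one_pos, prokhorovLE_one μ ν⟩ h

lemma glueThickening_swap (δ : X ⊕ Y → X ⊕ Y → ℝ) (ε : ℝ) (C : Set (Y ⊕ X)) :
    glueThickening (fun a b => δ a.swap b.swap) ε C =
      Sum.swap ⁻¹' glueThickening δ ε (Sum.swap ⁻¹' C) := by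
  ext a
  constructor
  · rintro ⟨b, hb, hab⟩
    exact ⟨b.swap, by simpa using hb, hab⟩
  · rintro ⟨b, hb, hab⟩
    exact ⟨b.swap, hb, by simpa using hab⟩

lemma IsGlueClosed.preimage_swap {δ : X ⊕ Y → X ⊕ Y → ℝ} {C : Set (Y ⊕ X)}
    (hC : IsGlueClosed (fun a b => δ a.swap b.swap) C) : IsGlueClosed δ (Sum.swap ⁻¹' C) := by
  intro a ha
  obtain ⟨η, hη, hfar⟩ := hC a.swap ha
  exact ⟨η, hη, fun b hb => by simpa using hfar b.swap hb⟩

end GlueNotions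

namespace IsGlueMetric

variable {X Y : Type*} [MetricSpace X] [MetricSpace Y] {δ : X ⊕ Y → X ⊕ Y → ℝ}

lemma of_metricSpace (m : MetricSpace (X ⊕ Y))
    (hl : ∀ x x' : X, m.dist (inl x) (inl x') = dist x x')
    (hr : ∀ y y' : Y, m.dist (inr y) (inr y') = dist y y') : IsGlueMetric m.dist where
  refl := dist_self
  pos _ _ hab := dist_pos.2 hab
  symm := dist_comm
  triangle := dist_triangle
  restr_left := hl
  restr_right := hr

lemma nonneg (hδ : IsGlueMetric δ) (a b : X ⊕ Y) : 0 ≤ δ a b := by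
  linarith [hδ.triangle a b a, hδ.refl a, hδ.symm a b]

lemma swap (hδ : IsGlueMetric δ) : IsGlueMetric fun a b : Y ⊕ X => δ a.swap b.swap where
  refl _ := hδ.refl _
  pos _ _ hab := hδ.pos _ _ (Sum.swap_leftInverse.injective.ne hab)
  symm _ _ := hδ.symm _ _
  triangle _ _ _ := hδ.triangle _ _ _
  restr_left := hδ.restr_right
  restr_right := hδ.restr_left

lemma glueHausdorffLT_swap (hδ : IsGlueMetric δ) {ε : ℝ} (h : GlueHausdorffLT δ ε) :
    GlueHausdorffLT (fun a b : Y ⊕ X => δ a.swap b.swap) ε :=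
  ⟨fun y => (h.2 y).imp fun _ hx => (hδ.symm _ _).trans_lt hx,
    fun x => (h.1 x).imp fun _ hy => (hδ.symm _ _).trans_lt hy⟩

lemma exists_glueHausdorffLT [BoundedSpace X] [BoundedSpace Y] [Nonempty X] [Nonempty Y]
    (hδ : IsGlueMetric δ) : ∃ ε, 0 < ε ∧ GlueHausdorffLT δ ε := by
  obtain ⟨x₀⟩ := ‹Nonempty X›
  obtain ⟨y₀⟩ := ‹Nonempty Y›
  set R := Metric.diam (univ : Set X) + δ (inl x₀) (inr y₀) + Metric.diam (univ : Set Y) + 1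
  have hlt (x : X) (y : Y) : δ (inl x) (inr y) < R := by
    have hx : dist x x₀ ≤ Metric.diam (univ : Set X) :=
      Metric.dist_le_diam_of_mem (Bornology.IsBounded.all _) trivial trivial
    have hy : dist y₀ y ≤ Metric.diam (univ : Set Y) :=
      Metric.dist_le_diam_of_mem (Bornology.IsBounded.all _) trivial trivial
    linarith [hδ.triangle (inl x) (inl x₀) (inr y), hδ.triangle (inl x₀) (inr y₀) (inr y),
      hδ.restr_left x x₀, hδ.restr_right y₀ y]
  exact ⟨R, (hδ.nonneg _ _).trans_lt (hlt x₀ y₀),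
    fun x => ⟨y₀, hlt x y₀⟩, fun y => ⟨x₀, hlt x₀ y⟩⟩

lemma glueHausdorffLT_of_glueHausdorffDist_lt [BoundedSpace X] [BoundedSpace Y] [Nonempty X]
    [Nonempty Y] (hδ : IsGlueMetric δ) {ε : ℝ} (h : glueHausdorffDist δ < ε) :
    GlueHausdorffLT δ ε :=
  (glueHausdorffLT_mono δ).of_sInf_setOf_pos_lt hδ.exists_glueHausdorffLT h

lemma abs_dist_sub_dist_le (hδ : IsGlueMetric δ) (x x' : X) (y y' : Y) :
    |dist x x' - dist y y'| ≤ δ (inl x) (inr y) + δ (inl x') (inr y') := by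
  rw [← hδ.restr_left, ← hδ.restr_right, abs_sub_le_iff]
  constructor
  · linarith [hδ.triangle (inl x) (inr y) (inl x'), hδ.triangle (inr y) (inr y') (inl x'),
      hδ.symm (inl x') (inr y')]
  · linarith [hδ.triangle (inr y) (inl x) (inr y'), hδ.triangle (inl x) (inl x') (inr y'),
      hδ.symm (inr y) (inl x)]

lemma isEpsIsometry (hδ : IsGlueMetric δ) {f : X → Y}
    {ε η : ℝ} (hf : ∀ x, δ (inl x) (inr (f x)) ≤ η) (hH : ∀ y, ∃ x, δ (inl x) (inr y) < ε)
    (hεη : ε ≤ η) : IsEpsIsometry (2 * η) f := by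
  refine ⟨fun x x' => (hδ.abs_dist_sub_dist_le x x' _ _).trans (by linarith [hf x, hf x']),
    fun y => ?_⟩
  obtain ⟨x, hx⟩ := hH y
  refine ⟨x, ?_⟩
  linarith [hδ.triangle (inr y) (inl x) (inr (f x)), hδ.symm (inr y) (inl x),
    hδ.restr_right y (f x), hf x]

lemma subset_glueClosure (hδ : IsGlueMetric δ) (S : Set (X ⊕ Y)) : S ⊆ glueClosure δ S :=
  fun a ha _ hγ => ⟨a, ha, by rwa [hδ.refl]⟩

lemma isGlueClosed_glueClosure (hδ : IsGlueMetric δ) (S : Set (X ⊕ Y)) :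
    IsGlueClosed δ (glueClosure δ S) := by
  intro a ha
  obtain ⟨γ, hγ, hfar⟩ : ∃ γ > 0, ∀ b ∈ S, γ ≤ δ a b := by
    simpa [glueClosure] using ha
  refine ⟨γ / 2, half_pos hγ, fun b hb => ?_⟩
  obtain ⟨s, hs, hbs⟩ := hb (γ / 2) (half_pos hγ)
  linarith [hfar s hs, hδ.triangle a b s]

lemma glueThickening_glueClosure_subset (hδ : IsGlueMetric δ) {ε : ℝ} {S : Set (X ⊕ Y)} :
    glueThickening δ ε (glueClosure δ S) ⊆ glueThickening δ ε S := by
  rintro a ⟨b, hb, hab⟩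
  obtain ⟨s, hs, hbs⟩ := hb (ε - δ a b) (sub_pos.2 hab)
  exact ⟨s, hs, by linarith [hδ.triangle a b s]⟩

lemma isGlueClosed_compl_glueThickening (hδ : IsGlueMetric δ) (ε : ℝ) (C : Set (X ⊕ Y)) :
    IsGlueClosed δ (glueThickening δ ε C)ᶜ := by
  intro a ha
  obtain ⟨b, hbC, hab⟩ : ∃ b ∈ C, δ a b < ε := not_not.1 ha
  refine ⟨ε - δ a b, sub_pos.2 hab, fun b' hb' => ?_⟩
  have hfar : ε ≤ δ b' b := not_lt.1 fun h => hb' ⟨b, hbC, h⟩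
  linarith [hδ.triangle b' a b, hδ.symm b' a]

lemma glueThickening_compl_glueThickening_subset (hδ : IsGlueMetric δ) (ε : ℝ)
    (C : Set (X ⊕ Y)) : glueThickening δ ε (glueThickening δ ε C)ᶜ ⊆ Cᶜ :=
  fun a ⟨b, hb, hab⟩ haC => hb ⟨a, haC, (hδ.symm b a).trans_lt hab⟩

lemma isOpen_preimage_inl_glueThickening (hδ : IsGlueMetric δ) (ε : ℝ) (C : Set (X ⊕ Y)) :
    IsOpen (inl ⁻¹' glueThickening δ ε C) := by
  refine Metric.isOpen_iff.2 fun x ⟨b, hbC, hxb⟩ =>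
    ⟨ε - δ (inl x) b, sub_pos.2 hxb, fun x' hx' => ⟨b, hbC, ?_⟩⟩
  rw [Metric.mem_ball] at hx'
  linarith [hδ.triangle (inl x') (inl x) b, hδ.restr_left x' x]

lemma isClosed_preimage_inr (hδ : IsGlueMetric δ) {C : Set (X ⊕ Y)} (hC : IsGlueClosed δ C) :
    IsClosed (inr ⁻¹' C) := by
  refine isOpen_compl_iff.1 (Metric.isOpen_iff.2 fun y hy => ?_)
  obtain ⟨η, hη, hfar⟩ := hC (inr y) hy
  refine ⟨η, hη, fun y' hy' hy'C => ?_⟩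
  rw [Metric.mem_ball, dist_comm] at hy'
  linarith [hfar _ hy'C, hδ.restr_right y y']

end IsGlueMetric

lemma exists_isGlueMetric (X Y : Type*) [MetricSpace X] [MetricSpace Y] :
    ∃ δ : X ⊕ Y → X ⊕ Y → ℝ, IsGlueMetric δ :=
  ⟨_, .of_metricSpace Metric.metricSpaceSum (fun _ _ => rfl) (fun _ _ => rfl)⟩

section Measures

variable {X Y : Type*} [MetricSpace X] [MetricSpace Y] [MeasurableSpace X] [MeasurableSpace Y]
  {δ : X ⊕ Y → X ⊕ Y → ℝ} {μ : Measure X} {ν : Measure Y} {ε η : ℝ}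

/-- Apply `h` to the glue-closed complement of the `ε`-thickening of `C` and pass to
complements. -/
lemma GlueProkhorovLE.reverse [OpensMeasurableSpace X] [OpensMeasurableSpace Y]
    [IsProbabilityMeasure μ] [IsProbabilityMeasure ν] (hδ : IsGlueMetric δ)
    (h : GlueProkhorovLE δ μ ν ε) {C : Set (X ⊕ Y)} (hC : IsGlueClosed δ C) :
    ν (inr ⁻¹' C) ≤ μ (inl ⁻¹' glueThickening δ ε C) + ENNReal.ofReal ε := by
  set U := inl ⁻¹' glueThickening δ ε C
  set K := inr ⁻¹' C
  have hU : MeasurableSet U := (hδ.isOpen_preimage_inl_glueThickening ε C).measurableSet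
  have hK : MeasurableSet K := (hδ.isClosed_preimage_inr hC).measurableSet
  have hUc : μ Uᶜ ≤ ν Kᶜ + ENNReal.ofReal ε :=
    (h _ (hδ.isGlueClosed_compl_glueThickening ε C)).trans <| add_le_add_left
      (measure_mono <| preimage_mono <| hδ.glueThickening_compl_glueThickening_subset ε C) _
  refine (ENNReal.add_le_add_iff_right (measure_ne_top μ Uᶜ)).1 ?_
  calc ν K + μ Uᶜ ≤ ν K + (ν Kᶜ + ENNReal.ofReal ε) := add_le_add_right hUc _
    _ = μ U + μ Uᶜ + ENNReal.ofReal ε := by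
      rw [← add_assoc, prob_add_prob_compl hK, prob_add_prob_compl hU]
    _ = μ U + ENNReal.ofReal ε + μ Uᶜ := add_right_comm _ _ _

lemma GlueProkhorovLE.swap [OpensMeasurableSpace X] [OpensMeasurableSpace Y]
    [IsProbabilityMeasure μ] [IsProbabilityMeasure ν] (hδ : IsGlueMetric δ)
    (h : GlueProkhorovLE δ μ ν ε) : GlueProkhorovLE (fun a b => δ a.swap b.swap) ν μ ε := by
  intro C hC
  rw [glueThickening_swap]
  exact h.reverse hδ hC.preimage_swap

lemma IsGlueMetric.prokhorovDist_map_le [OpensMeasurableSpace Y] (hδ : IsGlueMetric δ)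
    {f : X → Y} (hfm : Measurable f) (hf : ∀ x, δ (inl x) (inr (f x)) ≤ η)
    (hP : GlueProkhorovLE δ μ ν ε) (hε : 0 < ε) (hη : 0 ≤ η) :
    prokhorovDist (μ.map f) ν ≤ ε + η := by
  refine sInf_setOf_pos_le (P := ProkhorovLE _ _) (by linarith) fun D hD => ?_
  set S : Set (X ⊕ Y) := inl '' (f ⁻¹' D)
  have hthick : inr ⁻¹' glueThickening δ ε S ⊆ Metric.thickening (ε + η) D := by
    rintro y ⟨_, ⟨x, hxD, rfl⟩, hyx⟩
    refine Metric.mem_thickening_iff.2 ⟨f x, hxD, ?_⟩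
    linarith [hδ.triangle (inr y) (inl x) (inr (f x)), hδ.restr_right y (f x), hf x]
  calc μ.map f D = μ (f ⁻¹' D) := Measure.map_apply hfm hD.measurableSet
    _ ≤ μ (inl ⁻¹' glueClosure δ S) :=
      measure_mono fun x hx => hδ.subset_glueClosure S ⟨x, hx, rfl⟩
    _ ≤ ν (inr ⁻¹' glueThickening δ ε (glueClosure δ S)) + ENNReal.ofReal ε :=
      hP _ (hδ.isGlueClosed_glueClosure S)
    _ ≤ ν (Metric.thickening (ε + η) D) + ENNReal.ofReal (ε + η) :=
      add_le_add (measure_mono <| (preimage_mono hδ.glueThickening_glueClosure_subset).trans hthick)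
        (ENNReal.ofReal_le_ofReal (by linarith))

lemma IsGlueMetric.glueProkhorovLE_of_prokhorovLE_map [OpensMeasurableSpace Y]
    (hδ : IsGlueMetric δ) {f : X → Y} (hfm : Measurable f) (hf : ∀ x, δ (inl x) (inr (f x)) ≤ η)
    (hη : 0 ≤ η) {r : ℝ} (hP : ProkhorovLE (μ.map f) ν r) : GlueProkhorovLE δ μ ν (η + r) := by
  intro C _
  set A := inl ⁻¹' C
  have hthick : Metric.thickening r (closure (f '' A)) ⊆ inr ⁻¹' glueThickening δ (η + r) C := by
    rw [Metric.thickening_closure]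
    intro y hy
    obtain ⟨_, ⟨x, hxA, rfl⟩, hyx⟩ := Metric.mem_thickening_iff.1 hy
    refine ⟨inl x, hxA, ?_⟩
    linarith [hδ.triangle (inr y) (inr (f x)) (inl x), hδ.restr_right y (f x),
      hδ.symm (inr (f x)) (inl x), hf x]
  calc μ A ≤ μ (f ⁻¹' closure (f '' A)) :=
      measure_mono fun x hx => subset_closure (mem_image_of_mem f hx)
    _ = μ.map f (closure (f '' A)) :=
      (Measure.map_apply hfm isClosed_closure.measurableSet).symm
    _ ≤ ν (Metric.thickening r (closure (f '' A))) + ENNReal.ofReal r := hP _ isClosed_closure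
    _ ≤ ν (inr ⁻¹' glueThickening δ (η + r) C) + ENNReal.ofReal (η + r) :=
      add_le_add (measure_mono hthick) (ENNReal.ofReal_le_ofReal (by linarith))

end Measures

lemma exists_measurable_forall_lt_add {A B : Type*} [PseudoMetricSpace A]
    [TopologicalSpace.SeparableSpace A] [Nonempty A] [MeasurableSpace A] [OpensMeasurableSpace A]
    [MeasurableSpace B] (c : A → B → ℝ) (hc : ∀ a a' b, c a b ≤ dist a a' + c a' b)
    {ε θ : ℝ} (hθ : 0 < θ) (h : ∀ a, ∃ b, c a b < ε) :
    ∃ f : A → B, Measurable f ∧ ∀ a, c a (f a) < ε + θ := by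
  classical
  obtain ⟨u, hu⟩ := TopologicalSpace.exists_dense_seq A
  have hnear (a : A) : ∃ n, dist a (u n) < θ := hu.exists_dist_lt a hθ
  choose F hF using fun n => h (u n)
  refine ⟨fun a => F (Nat.find (hnear a)), measurable_from_nat.comp <| measurable_find hnear
    fun n => measurableSet_lt (measurable_id.dist measurable_const) measurable_const, fun a => ?_⟩
  set n := Nat.find (hnear a)
  linarith [hc a (u n) (F n), Nat.find_spec (hnear a), hF n]

section Comparison

variable {X Y : Type*} [MetricSpace X] [MetricSpace Y] [MeasurableSpace X] [MeasurableSpace Y]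
  {μ : Measure X} {ν : Measure Y}

lemma IsGlueMetric.exists_epsIsometry [Nonempty X] [TopologicalSpace.SeparableSpace X]
    [OpensMeasurableSpace X] [OpensMeasurableSpace Y] {δ : X ⊕ Y → X ⊕ Y → ℝ}
    (hδ : IsGlueMetric δ) {ε θ : ℝ} (hH : GlueHausdorffLT δ ε) (hP : GlueProkhorovLE δ μ ν ε)
    (hθ : 0 < θ) : ∃ f : X → Y, Measurable f ∧ IsEpsIsometry (2 * (ε + θ)) f ∧
      prokhorovDist (μ.map f) ν ≤ 2 * (ε + θ) := by
  obtain ⟨x₀⟩ := ‹Nonempty X›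
  obtain ⟨y₀, hy₀⟩ := hH.1 x₀
  have hε : 0 < ε := (hδ.nonneg _ _).trans_lt hy₀
  obtain ⟨f, hfm, hf⟩ := exists_measurable_forall_lt_add (fun x y => δ (inl x) (inr y))
    (fun x x' y => by simpa [hδ.restr_left] using hδ.triangle (inl x) (inl x') (inr y)) hθ hH.1
  have hf' (x : X) : δ (inl x) (inr (f x)) ≤ ε + θ := (hf x).le
  exact ⟨f, hfm, hδ.isEpsIsometry hf' hH.2 (by linarith),
    (hδ.prokhorovDist_map_le hfm hf' hP hε (by linarith)).trans (by linarith)⟩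

variable [CompactSpace X] [CompactSpace Y] [Nonempty X] [Nonempty Y]
  [OpensMeasurableSpace X] [OpensMeasurableSpace Y] [IsProbabilityMeasure μ]
  [IsProbabilityMeasure ν]

lemma IsGlueMetric.epsClose {δ : X ⊕ Y → X ⊕ Y → ℝ} (hδ : IsGlueMetric δ) {ε θ : ℝ}
    (hH : glueHausdorffDist δ < ε) (hP : glueProkhorovDist δ μ ν < ε) (hθ : 0 < θ) :
    EpsClose (2 * (ε + θ)) μ ν := by
  have hH' := hδ.glueHausdorffLT_of_glueHausdorffDist_lt hH
  have hP' := glueProkhorovLE_of_glueProkhorovDist_lt hP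
  obtain ⟨f, hfm, hf, hfP⟩ := hδ.exists_epsIsometry hH' hP' hθ
  obtain ⟨g, hgm, hg, hgP⟩ :=
    hδ.swap.exists_epsIsometry (hδ.glueHausdorffLT_swap hH') (hP'.swap hδ) hθ
  exact ⟨f, g, hfm, hgm, hf, hg, hfP, hgP⟩

lemma IsGlueMetric.deltaGHP_le {δ : X ⊕ Y → X ⊕ Y → ℝ} (hδ : IsGlueMetric δ) :
    deltaGHP μ ν ≤ 2 * max (glueHausdorffDist δ) (glueProkhorovDist δ μ ν) := by
  set m := max (glueHausdorffDist δ) (glueProkhorovDist δ μ ν)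
  have hm : 0 ≤ m := (sInf_setOf_pos_nonneg _).trans (le_max_left _ _)
  refine le_of_forall_pos_le_add fun τ hτ => ?_
  have hclose : EpsClose (2 * (m + τ / 4 + τ / 4)) μ ν :=
    hδ.epsClose ((le_max_left _ (glueProkhorovDist δ μ ν)).trans_lt (by linarith))
      ((le_max_right (glueHausdorffDist δ) _).trans_lt (by linarith)) (by positivity)
  exact (sInf_setOf_pos_le (P := (EpsClose · μ ν)) (by positivity) hclose).trans_eq (by ring)

lemma exists_epsClose : ∃ ε, 0 < ε ∧ EpsClose ε μ ν := by
  obtain ⟨δ, hδ⟩ := exists_isGlueMetric X Y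
  set m := max (glueHausdorffDist δ) (glueProkhorovDist δ μ ν)
  have hm : 0 ≤ m := (sInf_setOf_pos_nonneg _).trans (le_max_left _ _)
  exact ⟨_, by positivity, hδ.epsClose ((le_max_left _ (glueProkhorovDist δ μ ν)).trans_lt
    (lt_add_one m)) ((le_max_right (glueHausdorffDist δ) _).trans_lt (lt_add_one m)) one_pos⟩

lemma deltaGHP_le_two_mul_ghpDist : deltaGHP μ ν ≤ 2 * ghpDist μ ν := by
  obtain ⟨δ₀, hδ₀⟩ := exists_isGlueMetric X Y
  have : deltaGHP μ ν / 2 ≤ ghpDist μ ν := by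
    refine le_csInf ⟨_, δ₀, hδ₀, rfl⟩ ?_
    rintro _ ⟨δ, hδ, rfl⟩
    linarith [hδ.deltaGHP_le (μ := μ) (ν := ν)]
  linarith

end Comparison

lemma IsGlueMetric.of_glueDist {X Y Z : Type*} [MetricSpace X] [MetricSpace Y] [Nonempty Z]
    {Φ : Z → X} {Ψ : Z → Y} {ε : ℝ} (hε : 0 < ε)
    (H : ∀ p q, |dist (Φ p) (Φ q) - dist (Ψ p) (Ψ q)| ≤ 2 * ε) :
    IsGlueMetric (Metric.glueDist Φ Ψ ε) :=
  of_metricSpace (Metric.glueMetricApprox Φ Ψ ε hε H) (fun _ _ => rfl) (fun _ _ => rfl)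

lemma IsGlueMetric.glueHausdorffLT_of_forall_le {X Y : Type*} [MetricSpace X] [MetricSpace Y]
    {δ : X ⊕ Y → X ⊕ Y → ℝ} (hδ : IsGlueMetric δ) {f : X → Y} {ε η : ℝ}
    (hf : ∀ x, δ (inl x) (inr (f x)) ≤ η) (hnet : ∀ y, ∃ x, dist y (f x) < ε) (hε : 0 < ε) :
    GlueHausdorffLT δ (η + ε) := by
  refine ⟨fun x => ⟨f x, by linarith [hf x]⟩, fun y => ?_⟩
  obtain ⟨x, hx⟩ := hnet y
  refine ⟨x, ?_⟩
  linarith [hδ.triangle (inl x) (inr (f x)) (inr y), hδ.restr_right (f x) y, dist_comm y (f x),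
    hf x]

lemma ghpDist_le_of_isEpsIsometry {X Y : Type*} [MetricSpace X] [MetricSpace Y] [Nonempty X]
    [MeasurableSpace X] [MeasurableSpace Y] [OpensMeasurableSpace Y] {μ : Measure X}
    [IsProbabilityMeasure μ] {ν : Measure Y} {f : X → Y} {ε : ℝ} (hε : 0 < ε)
    (hfm : Measurable f) (hf : IsEpsIsometry ε f) (hP : prokhorovDist (μ.map f) ν ≤ ε) :
    ghpDist μ ν ≤ 2 * ε := by
  have : IsProbabilityMeasure (μ.map f) := Measure.isProbabilityMeasure_map hfm.aemeasurable
  set δ := Metric.glueDist id f (ε / 2)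
  have hδ : IsGlueMetric δ :=
    .of_glueDist (half_pos hε) fun p q => (hf.1 p q).trans_eq (by ring)
  have hnear (x : X) : δ (inl x) (inr (f x)) ≤ ε / 2 :=
    (Metric.glueDist_glued_points id f (ε / 2) x).le
  have hH : glueHausdorffDist δ ≤ 2 * ε :=
    sInf_setOf_pos_le (by positivity) <| glueHausdorffLT_mono δ (by linarith)
      (hδ.glueHausdorffLT_of_forall_le hnear hf.2 hε)
  have hP' : glueProkhorovDist δ μ ν ≤ 2 * ε :=
    sInf_setOf_pos_le (by positivity) <| glueProkhorovLE_mono δ μ ν (by linarith)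
      (hδ.glueProkhorovLE_of_prokhorovLE_map hfm hnear (by positivity)
        (prokhorovLE_of_prokhorovDist_lt (hP.trans_lt (by linarith : ε < 3 * ε / 2))))
  have hbdd : BddBelow {r : ℝ | ∃ δ : X ⊕ Y → X ⊕ Y → ℝ, IsGlueMetric δ ∧
      r = max (glueHausdorffDist δ) (glueProkhorovDist δ μ ν)} :=
    ⟨0, by rintro _ ⟨δ, -, rfl⟩; exact (sInf_setOf_pos_nonneg _).trans (le_max_left _ _)⟩
  exact (csInf_le hbdd ⟨δ, hδ, rfl⟩).trans (max_le hH hP')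

lemma ghpDist_le_two_mul_deltaGHP {X Y : Type*} [MetricSpace X] [MetricSpace Y]
    [CompactSpace X] [CompactSpace Y] [Nonempty X] [Nonempty Y]
    [MeasurableSpace X] [OpensMeasurableSpace X] [MeasurableSpace Y] [OpensMeasurableSpace Y]
    (μ : Measure X) (ν : Measure Y) [IsProbabilityMeasure μ] [IsProbabilityMeasure ν] :
    ghpDist μ ν ≤ 2 * deltaGHP μ ν := by
  have hne : {ε : ℝ | 0 < ε ∧ EpsClose ε μ ν}.Nonempty := exists_epsClose
  have : ghpDist μ ν / 2 ≤ deltaGHP μ ν := by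
    refine le_csInf hne fun ε ⟨hε, f, _, hfm, _, hf, _, hfP, _⟩ => ?_
    linarith [ghpDist_le_of_isEpsIsometry hε hfm hf hfP]
  linarith

/-- Comparison between `Δ_GHP` and the Gromov–Hausdorff–Prokhorov distance:
`(1/3) Δ_GHP ≤ d_GHP ≤ 2 Δ_GHP`. -/
theorem deltaGHP_le_ghpDist_le
    {X Y : Type*} [MetricSpace X] [MetricSpace Y]
    [CompactSpace X] [CompactSpace Y] [Nonempty X] [Nonempty Y]
    [MeasurableSpace X] [BorelSpace X] [MeasurableSpace Y] [BorelSpace Y]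
    (μ : Measure X) (μ' : Measure Y)
    [IsProbabilityMeasure μ] [IsProbabilityMeasure μ'] :
    (1 / 3 : ℝ) * deltaGHP μ μ' ≤ ghpDist μ μ' ∧ ghpDist μ μ' ≤ 2 * deltaGHP μ μ' := by
  have hΔ : 0 ≤ deltaGHP μ μ' := sInf_setOf_pos_nonneg _
  have hle : deltaGHP μ μ' ≤ 2 * ghpDist μ μ' := deltaGHP_le_two_mul_ghpDist
  exact ⟨by linarith, ghpDist_le_two_mul_deltaGHP μ μ'⟩
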